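/- arXiv:1901.07769 — 6 statements merged into one kernel-verified Lean document; each statement's English description precedes it below -/
import Mathlib

section
/- For every binary word c of length n ≥ 1, every integer m with n < m ≤ 2^{⌊log₂ n⌋+1}, and every residue a modulo m, there exists a binary word x of length n that agrees with c at every position whose (1-based) index is not a power of two, and such that σ(x) ≡ a (mod m). In particular, x differs from c in at most ⌊log₂ n⌋ + 1 positions, namely only at positions in {2^0, 2^1, …, 2^{⌊log₂ n⌋}}. -/
/-!
Write `s` for the moment of `c` with all bits at the positions `1, 2, 4, …, 2^⌊log₂ n⌋` cleared,
and pick `t < m` with `s + t ≡ a (mod m)`. Since `t < m ≤ 2^(⌊log₂ n⌋ + 1)`, the binary digits of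
`t` fit exactly into those positions, and writing digit `k` at position `2^k` adds `t` to the
moment.
-/

/-- The moment of a binary word `x = x_1 … x_n`: `σ(x) = ∑ i, i * x_i` (1-based indexing). -/
def mom {n : ℕ} (x : Fin n → Bool) : ℕ :=
  ∑ i : Fin n, ((i : ℕ) + 1) * (if x i then 1 else 0)

open Finset

namespace Nat

theorem sum_range_ite_testBit {t L : ℕ} (ht : t < 2 ^ L) :
    ∑ k ∈ range L, (if t.testBit k then 2 ^ k else 0) = t := by
  have hbits : (range L).filter (fun k => t.testBit k) = t.bitIndices.toFinset := by
    ext k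
    simp only [mem_filter, mem_range, List.mem_toFinset, mem_bitIndices, and_iff_right_iff_imp]
    intro hk
    exact (Nat.pow_lt_pow_iff_right one_lt_two).1 ((ge_two_pow_of_testBit hk).trans_lt ht)
  rw [← sum_filter, hbits, sum_toFinset_bitIndices_two_pow]

theorem exists_le_log_of_isPowerOfTwo {j n : ℕ} (hjn : j ≤ n) (hj : j.isPowerOfTwo) :
    ∃ k ≤ log 2 n, j = 2 ^ k := by
  obtain ⟨k, rfl⟩ := hj
  exact ⟨k, le_log_of_pow_le one_lt_two hjn, rfl⟩

theorem filter_range_isPowerOfTwo_succ {n : ℕ} (hn : n ≠ 0) :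
    (range n).filter (fun i => (i + 1).isPowerOfTwo) = (range (log 2 n + 1)).image (2 ^ · - 1) := by
  ext i
  simp only [mem_filter, mem_range, mem_image, Order.lt_add_one_iff]
  constructor
  · rintro ⟨hin, hi⟩
    obtain ⟨k, hk, hik⟩ := exists_le_log_of_isPowerOfTwo (succ_le_of_lt hin) hi
    exact ⟨k, hk, by omega⟩
  · rintro ⟨k, hk, rfl⟩
    have hpos := Nat.two_pow_pos k
    have hle := pow_le_of_le_log hn hk
    exact ⟨by omega, k, by omega⟩

theorem sum_range_isPowerOfTwo_testBit {n t : ℕ} (hn : n ≠ 0) (ht : t < 2 ^ (log 2 n + 1)) :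
    ∑ i ∈ range n, (if (i + 1).isPowerOfTwo then
      (if t.testBit (log 2 (i + 1)) then i + 1 else 0) else 0) = t := by
  have hinj : Set.InjOn (2 ^ · - 1 : ℕ → ℕ) (range (log 2 n + 1)) := fun k _ l _ h => by
    have := Nat.two_pow_pos k
    have := Nat.two_pow_pos l
    simp only at h
    exact Nat.pow_right_injective le_rfl (show 2 ^ k = 2 ^ l by omega)
  rw [← sum_filter, filter_range_isPowerOfTwo_succ hn, sum_image hinj]
  refine (sum_congr rfl fun k _ => ?_).trans (sum_range_ite_testBit ht)
  rw [Nat.sub_add_cancel Nat.one_le_two_pow, log_pow one_lt_two]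

theorem exists_lt_add_modEq (s a : ℕ) {m : ℕ} (hm : 0 < m) : ∃ t < m, s + t ≡ a [MOD m] := by
  refine ⟨(a + (m - 1) * s) % m, mod_lt _ hm, ?_⟩
  calc s + (a + (m - 1) * s) % m ≡ s + (a + (m - 1) * s) [MOD m] := (mod_modEq _ _).add_left _
    _ = a + m * s := by
        obtain ⟨m, rfl⟩ : ∃ k, m = k + 1 := ⟨m - 1, by omega⟩
        rw [Nat.add_sub_cancel]
        ring
    _ ≡ a [MOD m] := by simp [ModEq]

end Nat

section CheckBits

variable {n : ℕ}

/-- The positions `2^k` (1-based) serve as check bits, carrying the binary digits of `t`. -/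
def setCheckBits (c : Fin n → Bool) (t : ℕ) : Fin n → Bool := fun i =>
  if ((i : ℕ) + 1).isPowerOfTwo then t.testBit (Nat.log 2 (i + 1)) else c i

theorem setCheckBits_of_not_isPowerOfTwo {c : Fin n → Bool} {t : ℕ} {i : Fin n}
    (hi : ¬((i : ℕ) + 1).isPowerOfTwo) : setCheckBits c t i = c i :=
  if_neg hi

theorem mom_setCheckBits (hn : n ≠ 0) (c : Fin n → Bool) {t : ℕ}
    (ht : t < 2 ^ (Nat.log 2 n + 1)) : mom (setCheckBits c t) = mom (setCheckBits c 0) + t := by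
  have hterm : ∀ i : Fin n, ((i : ℕ) + 1) * (if setCheckBits c t i then 1 else 0) =
      ((i : ℕ) + 1) * (if setCheckBits c 0 i then 1 else 0) +
        (if ((i : ℕ) + 1).isPowerOfTwo then
          (if t.testBit (Nat.log 2 (i + 1)) then (i : ℕ) + 1 else 0) else 0) := by
    intro i
    unfold setCheckBits
    split_ifs <;> simp_all
  rw [mom, mom, sum_congr rfl fun i _ => hterm i, sum_add_distrib,
    Fin.sum_univ_eq_sum_range (fun i => if (i + 1).isPowerOfTwo then
      (if t.testBit (Nat.log 2 (i + 1)) then i + 1 else 0) else 0),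
    Nat.sum_range_isPowerOfTwo_testBit hn ht]

end CheckBits

theorem card_le_of_forall_eq_two_pow {n L : ℕ} {s : Finset (Fin n)}
    (hs : ∀ i ∈ s, ∃ k ≤ L, (i : ℕ) + 1 = 2 ^ k) : #s ≤ L + 1 := by
  have hlog : ∀ i ∈ s, (i : ℕ) + 1 = 2 ^ Nat.log 2 ((i : ℕ) + 1) ∧ Nat.log 2 ((i : ℕ) + 1) ≤ L := by
    intro i hi
    obtain ⟨k, hk, hik⟩ := hs i hi
    rw [hik, Nat.log_pow one_lt_two]
    exact ⟨rfl, hk⟩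
  calc #s ≤ #(range (L + 1)) :=
        card_le_card_of_injOn (fun i => Nat.log 2 ((i : ℕ) + 1))
          (fun i hi => mem_range.2 (Nat.lt_succ_of_le (hlog i hi).2))
          (fun i hi j hj h => Fin.ext <| Nat.succ_injective <|
            (hlog i hi).1.trans <| (congrArg (2 ^ ·) h).trans (hlog j hj).1.symm)
    _ = L + 1 := card_range _

/-- Any binary word of length `n ≥ 1` can be modified only at positions
whose (1-based) index is a power of two so that its moment is congruent to any
prescribed residue `a` modulo `m`, where `n < m ≤ 2^(⌊log₂ n⌋ + 1)`. In particular at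
most `⌊log₂ n⌋ + 1` bits are flipped, only at positions in `{2^0, …, 2^(⌊log₂ n⌋)}`. -/
theorem stmt1 {n : ℕ} (hn : 1 ≤ n) (c : Fin n → Bool) (m a : ℕ)
    (hm1 : n < m) (hm2 : m ≤ 2 ^ (Nat.log 2 n + 1)) :
    ∃ x : Fin n → Bool,
      (∀ i : Fin n, (¬ ∃ k, (i : ℕ) + 1 = 2 ^ k) → x i = c i) ∧
      mom x ≡ a [MOD m] ∧
      hammingDist c x ≤ Nat.log 2 n + 1 ∧
      (∀ i : Fin n, x i ≠ c i → ∃ k ≤ Nat.log 2 n, (i : ℕ) + 1 = 2 ^ k) := by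
  obtain ⟨t, htm, hta⟩ := Nat.exists_lt_add_modEq (mom (setCheckBits c 0)) a (by omega : 0 < m)
  have hchanged : ∀ i : Fin n, setCheckBits c t i ≠ c i → ∃ k ≤ Nat.log 2 n, (i : ℕ) + 1 = 2 ^ k :=
    fun i hi => Nat.exists_le_log_of_isPowerOfTwo i.isLt
      (not_imp_comm.1 setCheckBits_of_not_isPowerOfTwo hi)
  refine ⟨setCheckBits c t, fun i => setCheckBits_of_not_isPowerOfTwo, ?_, ?_, hchanged⟩
  · rwa [mom_setCheckBits (by omega) c (htm.trans_le hm2)]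
  · exact card_le_of_forall_eq_two_pow fun i hi => hchanged i (mem_filter.1 hi).2.symm
end

section
/- Let C be a binary code of length n with minimum Hamming distance d_min, let m be an integer with n < m ≤ 2^{⌊log₂ n⌋+1}, let a be a residue modulo m, and let d be a natural number with 2d < d_min. Suppose that for every c ∈ C there is a binary word x_c of length n with σ(x_c) ≡ a (mod m) and d_H(c, x_c) ≤ d. Then the map c ↦ x_c is injective, the set {x_c : c ∈ C} has minimum Hamming distance at least d_min − 2d, and all of its elements lie in a single residue class of σ modulo m; consequently (since m > n) any two distinct words x_c, x_{c'}, viewed as lists of bits, have no common subsequence of length n − 1, i.e., the code {x_c : c ∈ C} corrects a single deletion. -/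
section HammingDistance

variable {ι : Type*} {β : ι → Type*} [Fintype ι] [∀ i, DecidableEq (β i)]

theorem hammingDist_sub_le_hammingDist (x y x' y' : ∀ i, β i) :
    hammingDist x y - (hammingDist x x' + hammingDist y y') ≤ hammingDist x' y' := by
  have hx := hammingDist_triangle x x' y
  have hy := hammingDist_triangle x' y' y
  rw [hammingDist_comm y' y] at hy
  omega

end HammingDistance

namespace List

/-- A `true` at position `i` (counted from `1`) lies in exactly `i` suffixes, so this is `σ`. -/
def momList : List Bool → ℕ
  | [] => 0
  | b :: t => (b :: t).count true + momList t

theorem momList_cons (b : Bool) (t : List Bool) :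
    momList (b :: t) = b.toNat + t.count true + momList t := by
  cases b <;> simp [momList, add_comm]

theorem momList_append (a c : List Bool) :
    momList (a ++ c) = momList a + a.length * c.count true + momList c := by
  induction a with
  | nil => simp [momList]
  | cons b t ih => simp only [cons_append, momList_cons, ih, count_append, length_cons]; ring

theorem count_true_ofFn {n : ℕ} (x : Fin n → Bool) :
    (ofFn x).count true = ∑ i, (x i).toNat := by
  induction n with
  | zero => simp
  | succ n ih => rw [ofFn_succ, count_cons, ih, Fin.sum_univ_succ]; cases x 0 <;> simp [add_comm]

theorem momList_ofFn {n : ℕ} (x : Fin n → Bool) : momList (ofFn x) = mom x := by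
  have hbit (b : Bool) : (if b then 1 else 0) = b.toNat := by cases b <;> rfl
  induction n with
  | zero => simp [momList, mom]
  | succ n ih =>
    simp only [mom, hbit] at ih ⊢
    rw [ofFn_succ, momList_cons, count_true_ofFn, ih, Fin.sum_univ_succ]
    simp only [Fin.val_zero, Fin.val_succ, add_mul, one_mul, Finset.sum_add_distrib]
    ring

def insertionGain (a : List Bool) (b : Bool) (c : List Bool) : ℕ :=
  (a.length + 1) * b.toNat + c.count true

theorem momList_insert (a : List Bool) (b : Bool) (c : List Bool) :
    momList (a ++ b :: c) = momList (a ++ c) + insertionGain a b c := by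
  rw [momList_append, momList_append, momList_cons, count_cons, insertionGain]
  cases b <;> simp <;> ring

theorem insertionGain_le_length (a : List Bool) (b : Bool) (c : List Bool) :
    insertionGain a b c ≤ (a ++ b :: c).length := by
  have := count_le_length (a := true) (l := c)
  cases b <;> simp [insertionGain] <;> omega

theorem cons_eq_append_singleton_of_insertionGain_eq {a mid c : List Bool} {b b' : Bool}
    (h : insertionGain a b (mid ++ c) = insertionGain (a ++ mid) b' c) :
    b :: mid = mid ++ [b'] := by
  have hrun : b = b' ∧ ∀ y ∈ mid, y = b := by
    have := count_le_length (a := true) (l := mid)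
    simp only [insertionGain, count_append, length_append] at h
    cases b <;> cases b' <;> simp at h
    · exact ⟨rfl, fun y hy => Bool.eq_false_iff.mpr fun hy' => count_eq_zero.mp h (hy' ▸ hy)⟩
    · omega
    · omega
    · exact ⟨rfl, fun y hy => (count_eq_length.mp (by omega) y hy).symm⟩
  obtain ⟨rfl, hmid⟩ := hrun
  rw [eq_replicate_of_mem hmid, ← replicate_succ, replicate_succ']

theorem insert_eq_insert_of_momList_eq {a c a' c' : List Bool} {b b' : Bool}
    (hw : a ++ c = a' ++ c') (h : momList (a ++ b :: c) = momList (a' ++ b' :: c')) :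
    a ++ b :: c = a' ++ b' :: c' := by
  rw [momList_insert, momList_insert, hw, Nat.add_left_cancel_iff] at h
  rcases append_eq_append_iff.mp hw with ⟨mid, rfl, rfl⟩ | ⟨mid, rfl, rfl⟩
  · simp [cons_eq_append_singleton_of_insertionGain_eq h, ← cons_append]
  · simp [cons_eq_append_singleton_of_insertionGain_eq h.symm, ← cons_append]

theorem exists_eq_append_cons_of_sublist {α : Type*} {w l : List α} (h : w <+ l)
    (hl : w.length + 1 = l.length) : ∃ a b c, l = a ++ b :: c ∧ w = a ++ c := by
  induction h with
  | slnil => simp at hl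
  | cons b h _ => exact ⟨[], b, _, rfl, by simpa using h.eq_of_length (by simpa using hl)⟩
  | cons_cons b _ ih =>
    obtain ⟨a, b', c, rfl, rfl⟩ := ih (by simpa using hl)
    exact ⟨b :: a, b', c, rfl, rfl⟩

theorem eq_of_sublist_of_momList_modEq {m : ℕ} {l l' w : List Bool}
    (hlen : l.length = l'.length) (hm : l.length < m) (hmod : momList l ≡ momList l' [MOD m])
    (hw : w.length + 1 = l.length) (h : w <+ l) (h' : w <+ l') : l = l' := by
  obtain ⟨a, b, c, rfl, rfl⟩ := exists_eq_append_cons_of_sublist h hw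
  obtain ⟨a', b', c', rfl, hw'⟩ := exists_eq_append_cons_of_sublist h' (hw.trans hlen)
  have hgain : insertionGain a b c = insertionGain a' b' c' := by
    rw [momList_insert, momList_insert, hw'] at hmod
    exact (Nat.ModEq.add_left_cancel' _ hmod).eq_of_lt_of_lt
      ((insertionGain_le_length a b c).trans_lt hm)
      ((insertionGain_le_length a' b' c').trans_lt (hlen ▸ hm))
  refine insert_eq_insert_of_momList_eq hw' ?_
  rw [momList_insert, momList_insert, hw', hgain]

end List

theorem eq_of_common_sublist_of_mom_modEq {n m : ℕ} {x y : Fin n → Bool} (hm : n < m)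
    (hmod : mom x ≡ mom y [MOD m]) {w : List Bool} (hw : w.length = n - 1)
    (hx : w.Sublist (List.ofFn x)) (hy : w.Sublist (List.ofFn y)) : x = y := by
  rcases Nat.eq_zero_or_pos n with rfl | hn
  · exact Subsingleton.elim x y
  refine List.ofFn_injective (List.eq_of_sublist_of_momList_modEq (m := m) ?_ ?_ ?_ ?_ hx hy)
  · simp only [List.length_ofFn]
  · simpa only [List.length_ofFn] using hm
  · simpa only [List.momList_ofFn] using hmod
  · simp only [List.length_ofFn]; omega

theorem stmt2_general {n : ℕ} (C : Set (Fin n → Bool)) (dmin d m a : ℕ)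
    (hmin : ∀ c ∈ C, ∀ c' ∈ C, c ≠ c' → dmin ≤ hammingDist c c')
    (hd : 2 * d < dmin) (hm1 : n < m)
    (x : (Fin n → Bool) → (Fin n → Bool))
    (hx : ∀ c ∈ C, mom (x c) ≡ a [MOD m] ∧ hammingDist c (x c) ≤ d) :
    Set.InjOn x C ∧
    (∀ c ∈ C, ∀ c' ∈ C, c ≠ c' → dmin - 2 * d ≤ hammingDist (x c) (x c')) ∧
    (∀ c ∈ C, ∀ c' ∈ C, mom (x c) ≡ mom (x c') [MOD m]) ∧
    (∀ c ∈ C, ∀ c' ∈ C, c ≠ c' →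
      ¬ ∃ w : List Bool, w.length = n - 1 ∧
        w.Sublist (List.ofFn (x c)) ∧ w.Sublist (List.ofFn (x c'))) := by
  have hdist : ∀ c ∈ C, ∀ c' ∈ C, c ≠ c' →
      dmin - 2 * d ≤ hammingDist (x c) (x c') := by
    intro c hc c' hc' hne
    refine le_trans ?_ (hammingDist_sub_le_hammingDist c c' (x c) (x c'))
    have := hmin c hc c' hc' hne
    have := (hx c hc).2
    have := (hx c' hc').2
    omega
  have hxne : ∀ c ∈ C, ∀ c' ∈ C, c ≠ c' → x c ≠ x c' := by
    intro c hc c' hc' hne heq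
    have := hdist c hc c' hc' hne
    rw [heq, hammingDist_self] at this
    omega
  have hmod : ∀ c ∈ C, ∀ c' ∈ C, mom (x c) ≡ mom (x c') [MOD m] :=
    fun c hc c' hc' => (hx c hc).1.trans (hx c' hc').1.symm
  refine ⟨fun c hc c' hc' heq => by_contra fun hne => hxne c hc c' hc' hne heq, hdist, hmod, ?_⟩
  rintro c hc c' hc' hne ⟨w, hw, hsub, hsub'⟩
  exact hxne c hc c' hc' hne
    (eq_of_common_sublist_of_mom_modEq hm1 (hmod c hc c' hc') hw hsub hsub')

/-- Moment-balancing by at most `d` flips per codeword (with `2d < d_min`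
and `n < m ≤ 2^(⌊log₂ n⌋+1)`) is injective, the balanced code has minimum Hamming
distance at least `d_min − 2d`, all its words lie in one residue class of `σ` mod `m`,
and (since `m > n`) distinct balanced words have no common subsequence of length
`n − 1`, i.e. the balanced code corrects a single deletion. -/
theorem stmt2 {n : ℕ} (C : Set (Fin n → Bool)) (dmin d m a : ℕ)
    (hmin : ∀ c ∈ C, ∀ c' ∈ C, c ≠ c' → dmin ≤ hammingDist c c')
    (hd : 2 * d < dmin) (hm1 : n < m) (hm2 : m ≤ 2 ^ (Nat.log 2 n + 1))
    (x : (Fin n → Bool) → (Fin n → Bool))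
    (hx : ∀ c ∈ C, mom (x c) ≡ a [MOD m] ∧ hammingDist c (x c) ≤ d) :
    Set.InjOn x C ∧
    (∀ c ∈ C, ∀ c' ∈ C, c ≠ c' → dmin - 2 * d ≤ hammingDist (x c) (x c')) ∧
    (∀ c ∈ C, ∀ c' ∈ C, mom (x c) ≡ mom (x c') [MOD m]) ∧
    (∀ c ∈ C, ∀ c' ∈ C, c ≠ c' →
      ¬ ∃ w : List Bool, w.length = n - 1 ∧
        w.Sublist (List.ofFn (x c)) ∧ w.Sublist (List.ofFn (x c'))) :=
  stmt2_general C dmin d m a hmin hd hm1 x hx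
end

section
/- Let c be a binary word of length n ≥ 1 and let m be an integer with m > n. Among the n + 1 words consisting of c itself and the n words c^(i) (1 ≤ i ≤ n) obtained from c by flipping the single bit at position i, the values of σ modulo m take at least ⌈n/2⌉ + 1 distinct residues. -/
lemma mom_update {n : ℕ} (c : Fin n → Bool) (i : Fin n) (b : Bool) :
    mom (Function.update c i b) + ((i : ℕ) + 1) * (if c i then 1 else 0)
      = mom c + ((i : ℕ) + 1) * (if b then 1 else 0) := by
  classical
  unfold mom
  rw [← Finset.add_sum_erase _ _ (Finset.mem_univ i),
      ← Finset.add_sum_erase _ (fun j : Fin n => ((j : ℕ) + 1) * (if c j then 1 else 0))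
        (Finset.mem_univ i)]
  have hrest : ∑ j ∈ Finset.univ.erase i,
      ((j : ℕ) + 1) * (if Function.update c i b j then 1 else 0)
      = ∑ j ∈ Finset.univ.erase i, ((j : ℕ) + 1) * (if c j then 1 else 0) := by
    refine Finset.sum_congr rfl fun j hj => ?_
    rw [Function.update_of_ne (Finset.ne_of_mem_erase hj)]
  rw [hrest, Function.update_self]
  ring

/-- Among `c` and the `n` one-bit-flips of `c`, the moments modulo `m > n`
take at least `⌈n/2⌉ + 1` distinct residues. -/
theorem stmt4 {n : ℕ} (hn : 1 ≤ n) (c : Fin n → Bool) (m : ℕ) (hm : n < m) :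
    (n + 1) / 2 + 1 ≤
      (Finset.image (fun x : Fin n → Bool => mom x % m)
        (insert c (Finset.image (fun i : Fin n => Function.update c i (!c i))
          Finset.univ))).card := by
  classical
  haveI : NeZero m := ⟨by omega⟩
  set S := (Finset.image (fun x : Fin n → Bool => mom x % m)
      (insert c (Finset.image (fun i : Fin n => Function.update c i (!c i))
        Finset.univ))) with hS
  set g : Fin n → ℕ := fun i => mom (Function.update c i (!c i)) % m with hg
  -- shifts in ZMod m
  set d : Fin n → ZMod m := fun i =>
    if c i then -((((i : ℕ) + 1 : ℕ) : ZMod m)) else (((i : ℕ) + 1 : ℕ) : ZMod m) with hd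
  have castinj : ∀ i j : Fin n, ((((i : ℕ) + 1 : ℕ)) : ZMod m) = (((j : ℕ) + 1 : ℕ)) → i = j := by
    intro i j h
    have h1 : (((i : ℕ) + 1 : ℕ) : ZMod m).val = (((j : ℕ) + 1 : ℕ) : ZMod m).val := by rw [h]
    rw [ZMod.val_cast_of_lt (by omega), ZMod.val_cast_of_lt (by omega)] at h1
    exact Fin.ext (by omega)
  have cast_flip : ∀ i : Fin n,
      ((mom (Function.update c i (!c i)) : ℕ) : ZMod m) = ((mom c : ℕ) : ZMod m) + d i := by
    intro i
    have h := mom_update c i (!c i)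
    have h2 : (((mom (Function.update c i (!c i)) + ((i : ℕ) + 1) * (if c i then 1 else 0) : ℕ))
        : ZMod m) = ((mom c + ((i : ℕ) + 1) * (if !c i then 1 else 0) : ℕ) : ZMod m) := by
      rw [h]
    cases hci : c i <;> simp [hci] at h2 ⊢ <;> push_cast at h2 ⊢ <;>
      simp [hd, hci] <;> linear_combination h2
  have dne : ∀ i : Fin n, d i ≠ 0 := by
    intro i hdi
    have : ((((i : ℕ) + 1 : ℕ)) : ZMod m) = 0 := by
      by_cases hci : c i
      · simp only [hd, hci, if_true] at hdi; exact neg_eq_zero.mp hdi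
      · simpa only [hd, hci, if_false, Bool.false_eq_true] using hdi
    have h1 : (((i : ℕ) + 1 : ℕ) : ZMod m).val = 0 := by rw [this]; simp
    rw [ZMod.val_cast_of_lt (by omega)] at h1
    omega
  have gcast : ∀ i : Fin n, ((g i : ℕ) : ZMod m) = ((mom c : ℕ) : ZMod m) + d i := by
    intro i; rw [hg]; simp only [ZMod.natCast_mod]; exact cast_flip i
  have hinj : ∀ i j : Fin n, c i = c j → g i = g j → i = j := by
    intro i j hcij hgij
    have h1 : ((mom c : ℕ) : ZMod m) + d i = ((mom c : ℕ) : ZMod m) + d j := by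
      rw [← gcast i, ← gcast j, hgij]
    have h2 : d i = d j := by
      exact add_left_cancel h1
    by_cases hci : c i
    · have hcj : c j = true := by rw [← hcij]; exact hci
      simp only [hd, hci, hcj, if_true] at h2
      exact castinj i j (neg_injective h2)
    · have hcj : c j = false := by rw [← hcij]; simpa using hci
      simp only [hd, hci, hcj, if_false, Bool.false_eq_true] at h2
      exact castinj i j h2
  have gne : ∀ i : Fin n, g i ≠ mom c % m := by
    intro i hgi
    have h1 : ((g i : ℕ) : ZMod m) = ((mom c % m : ℕ) : ZMod m) := by rw [hgi]
    rw [gcast i, ZMod.natCast_mod] at h1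
    exact dne i (by linear_combination h1)
  -- every g i and mom c % m lie in S
  have hmemc : mom c % m ∈ S := by
    apply Finset.mem_image_of_mem
    exact Finset.mem_insert_self _ _
  have hmemg : ∀ i : Fin n, g i ∈ S := by
    intro i
    apply Finset.mem_image_of_mem
    exact Finset.mem_insert_of_mem
      (Finset.mem_image_of_mem _ (Finset.mem_univ i))
  -- fibers of g have size ≤ 2
  have hfib : ∀ a ∈ Finset.image g Finset.univ,
      (Finset.univ.filter fun i => g i = a).card ≤ 2 := by
    intro a _
    have : (Finset.univ.filter fun i => g i = a).card ≤ (Finset.univ : Finset Bool).card := by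
      apply Finset.card_le_card_of_injOn (fun i => c i)
      · intro i _; exact Finset.mem_univ _
      · intro i hi j hj hc
        simp only [Finset.mem_coe, Finset.mem_filter] at hi hj
        exact hinj i j hc (hi.2.trans hj.2.symm)
    simpa using this
  have hcard2 : n ≤ 2 * (Finset.image g Finset.univ).card := by
    have := Finset.card_le_mul_card_image (Finset.univ : Finset (Fin n)) 2 hfib
    simpa using this
  have hsub : insert (mom c % m) (Finset.image g Finset.univ) ⊆ S := by
    intro x hx
    rcases Finset.mem_insert.mp hx with h | h
    · rw [h]; exact hmemc
    · rcases Finset.mem_image.mp h with ⟨i, _, rfl⟩; exact hmemg i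
  have hnotmem : mom c % m ∉ Finset.image g Finset.univ := by
    intro h
    rcases Finset.mem_image.mp h with ⟨i, _, hi⟩
    exact gne i hi
  have hcins : (insert (mom c % m) (Finset.image g Finset.univ)).card
      = (Finset.image g Finset.univ).card + 1 := Finset.card_insert_of_notMem hnotmem
  have hle := Finset.card_le_card hsub
  omega
end

section
/- Let C be a binary code of length n with |C| = M codewords and minimum Hamming distance d_min ≥ 3. Then there exist a residue a modulo n + 1 and a code C' of binary words of length n such that: (i) every x ∈ C' satisfies σ(x) ≡ a (mod n+1); (ii) every x ∈ C' is at Hamming distance at most 1 from some codeword of C, and no two distinct words of C' are within Hamming distance 1 of the same codeword of C; (iii) |C'| ≥ ⌈M(⌈n/2⌉+1)/(n+1)⌉ ≥ ⌈M/2⌉; and (iv) the minimum Hamming distance of C' is at least d_min − 2. In particular, any two distinct words of C', viewed as lists of bits, have no common subsequence of length n − 1, so C' corrects a single deletion. -/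
/-
Flipping bit `i` of a word `c` (1-based) moves its moment by `+i` or by `-i ≡ n + 1 - i` modulo
`n + 1`. For `i ≤ ⌈n/2⌉` these shifts are pairwise distinct and nonzero, so the radius-one Hamming
ball around every codeword realises at least `⌈n/2⌉ + 1` residues. Averaging over the `n + 1`
residues, some residue `a` is realised by at least `M (⌈n/2⌉ + 1) / (n + 1)` codewords; choosing
one word of residue `a` in each of their balls gives `C'`. As `d_min ≥ 3`, these balls are disjoint,
which yields injectivity, the separation property and the distance `d_min - 2`. Finally `C'` lies
in a Varshamov–Tenengolts code, and the Levenshtein argument shows that two words of equal moment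
mod `n + 1` sharing a subsequence of length `n - 1` coincide.
-/

open Finset

theorem hammingDist_update_le_one {ι : Type*} [Fintype ι] [DecidableEq ι] {β : ι → Type*}
    [∀ i, DecidableEq (β i)] (x : ∀ i, β i) (i : ι) (b : β i) :
    hammingDist x (Function.update x i b) ≤ 1 := by
  refine (card_le_card fun j hj => ?_).trans (card_singleton i).le
  by_contra hji
  simp [Function.update_of_ne (mem_singleton.not.mp hji)] at hj

theorem hammingDist_le_hammingDist_add_two {ι : Type*} [Fintype ι] {β : ι → Type*}
    [∀ i, DecidableEq (β i)] {c c' x y : ∀ i, β i} (hx : hammingDist c x ≤ 1)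
    (hy : hammingDist c' y ≤ 1) : hammingDist c c' ≤ hammingDist x y + 2 := by
  have h₁ := hammingDist_triangle c x c'
  have h₂ := hammingDist_triangle x y c'
  rw [hammingDist_comm y] at h₂
  omega

theorem eq_of_hammingDist_le_one {ι : Type*} [Fintype ι] {β : ι → Type*}
    [∀ i, DecidableEq (β i)] {C : Finset (∀ i, β i)}
    (hC : ∀ c ∈ C, ∀ c' ∈ C, c ≠ c' → 3 ≤ hammingDist c c') {c c' x : ∀ i, β i}
    (hc : c ∈ C) (hc' : c' ∈ C) (hx : hammingDist c x ≤ 1) (hx' : hammingDist c' x ≤ 1) :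
    c = c' := by
  by_contra hne
  have := hammingDist_le_hammingDist_add_two hx hx'
  have := hC c hc c' hc' hne
  simp only [hammingDist_self] at *
  omega

theorem exists_mul_le_card_filter_mem {α β : Type*} [Fintype β] [Nonempty β] [DecidableEq β]
    (s : Finset α) (R : α → Finset β) {r : ℕ} (hr : ∀ a ∈ s, r ≤ (R a).card) :
    ∃ b, s.card * r ≤ Fintype.card β * (s.filter (b ∈ R ·)).card := by
  have hsum : ∑ a ∈ s, (R a).card = ∑ b, (s.filter (b ∈ R ·)).card := by
    simpa [bipartiteAbove, bipartiteBelow, filter_mem_eq_inter] using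
      sum_card_bipartiteAbove_eq_sum_card_bipartiteBelow (fun a b => b ∈ R a) (s := s) (t := univ)
  obtain ⟨b, -, hb⟩ := exists_le_of_sum_le univ_nonempty (f := fun _ => s.card * r)
    (g := fun b => Fintype.card β * (s.filter (b ∈ R ·)).card) (by
      simp only [sum_const, card_univ, smul_eq_mul, ← mul_sum, ← hsum]
      exact Nat.mul_le_mul_left _ (by simpa using card_nsmul_le_sum s _ r hr))
  exact ⟨b, hb⟩

section Moment

variable {n : ℕ}

theorem mom_update_add (x : Fin n → Bool) (i : Fin n) (b : Bool) :
    mom (Function.update x i b) + ((i : ℕ) + 1) * (if x i then 1 else 0) =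
      mom x + ((i : ℕ) + 1) * (if b then 1 else 0) := by
  simp only [mom, ← add_sum_erase _ _ (mem_univ i), Function.update_self]
  rw [sum_congr rfl fun j hj => by rw [Function.update_of_ne (ne_of_mem_erase hj)]]
  ring

theorem natCast_mom_flip (x : Fin n → Bool) (i : Fin n) :
    (mom (Function.update x i (!x i)) : ZMod (n + 1)) =
      mom x + ((if x i then n - i else i + 1 : ℕ) : ZMod (n + 1)) := by
  have h := mom_update_add x i (!x i)
  cases hx : x i <;> simp only [hx, Bool.not_false, Bool.not_true, Bool.false_eq_true, ↓reduceIte,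
    mul_zero, mul_one, add_zero] at h ⊢
  · rw [h]; push_cast; ring
  · have h0 : (n : ZMod (n + 1)) + 1 = 0 := by exact_mod_cast ZMod.natCast_self (n + 1)
    rw [← h]; push_cast [Nat.cast_sub i.is_le']; linear_combination -h0

def ballResidues (c : Fin n → Bool) : Finset (ZMod (n + 1)) :=
  (univ.filter fun x => hammingDist c x ≤ 1).image fun x => (mom x : ZMod (n + 1))

theorem mem_ballResidues {c : Fin n → Bool} {a : ZMod (n + 1)} :
    a ∈ ballResidues c ↔ ∃ x, hammingDist c x ≤ 1 ∧ (mom x : ZMod (n + 1)) = a := by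
  simp [ballResidues]

theorem le_card_ballResidues (c : Fin n → Bool) : (n + 1) / 2 + 1 ≤ (ballResidues c).card := by
  have hk : (n + 1) / 2 ≤ n := by omega
  let shift : Option (Fin ((n + 1) / 2)) → ℕ := fun o =>
    o.elim 0 fun j => if c (Fin.castLE hk j) then n - j else j + 1
  have hshift : ∀ o, shift o ≤ n := by
    rintro (_ | j) <;> simp only [shift, Option.elim] <;> (try split_ifs) <;> omega
  have hshift_inj : Function.Injective shift := by
    rintro (_ | i) (_ | j) h <;> simp only [shift, Option.elim] at h <;> (try split_ifs at h) <;>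
      first | rfl | omega | (congr 1; ext; omega)
  calc (n + 1) / 2 + 1 = (univ : Finset (Option (Fin ((n + 1) / 2)))).card := by simp
    _ ≤ (ballResidues c).card := by
      refine card_le_card_of_injOn (fun o => ((mom c + shift o : ℕ) : ZMod (n + 1))) ?_ ?_
      · rintro (_ | j) -
        · exact mem_ballResidues.mpr ⟨c, by simp, by simp [shift]⟩
        · refine mem_ballResidues.mpr
            ⟨_, hammingDist_update_le_one c (Fin.castLE hk j) (!c (Fin.castLE hk j)), ?_⟩
          rw [natCast_mom_flip]; exact (Nat.cast_add _ _).symm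
      · intro o _ o' _ h
        rw [ZMod.natCast_eq_natCast_iff'] at h
        have := (Nat.ModEq.add_left_cancel' _ h).eq_of_lt_of_lt (Nat.lt_succ_of_le (hshift o))
          (Nat.lt_succ_of_le (hshift o'))
        exact hshift_inj this

theorem exists_moment_balanced_code (C : Finset (Fin n → Bool))
    (hC : ∀ c ∈ C, ∀ c' ∈ C, c ≠ c' → 3 ≤ hammingDist c c') :
    ∃ (a : ZMod (n + 1)) (C' : Finset (Fin n → Bool)),
      (∀ x ∈ C', (mom x : ZMod (n + 1)) = a) ∧
      (∀ x ∈ C', ∃ c ∈ C, hammingDist c x ≤ 1) ∧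
      (∀ x ∈ C', ∀ y ∈ C', ∀ c ∈ C, hammingDist c x ≤ 1 → hammingDist c y ≤ 1 → x = y) ∧
      C.card * ((n + 1) / 2 + 1) ≤ (n + 1) * C'.card := by
  obtain ⟨a, ha⟩ := exists_mul_le_card_filter_mem C ballResidues fun c _ => le_card_ballResidues c
  rw [ZMod.card] at ha
  set F := C.filter (a ∈ ballResidues ·)
  have hFC : F ⊆ C := filter_subset _ _
  have hF : ∀ c ∈ F, ∃ x, hammingDist c x ≤ 1 ∧ (mom x : ZMod (n + 1)) = a :=
    fun c hc => mem_ballResidues.mp (mem_filter.mp hc).2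
  choose! pick hpick_near hpick_mom using hF
  have hdecode : ∀ c ∈ F, ∀ c' ∈ C, hammingDist c' (pick c) ≤ 1 → c' = c :=
    fun c hc c' hc' h => eq_of_hammingDist_le_one hC hc' (hFC hc) h (hpick_near c hc)
  refine ⟨a, F.image pick, by simpa using hpick_mom, ?_, ?_, ?_⟩
  · simp only [forall_mem_image]
    exact fun c hc => ⟨c, hFC hc, hpick_near c hc⟩
  · simp only [forall_mem_image]
    intro c₁ h₁ c₂ h₂ c hc hx hy
    rw [← hdecode c₁ h₁ c hc hx, hdecode c₂ h₂ c hc hy]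
  · have hinj : Set.InjOn pick F := fun c₁ h₁ c₂ h₂ h =>
      hdecode c₂ h₂ c₁ (hFC h₁) (h ▸ hpick_near c₁ h₁)
    rwa [card_image_of_injOn hinj]

end Moment

def listMoment : List Bool → ℕ
  | [] => 0
  | b :: l => b.toNat + l.count true + listMoment l

theorem listMoment_append (l₁ l₂ : List Bool) :
    listMoment (l₁ ++ l₂) = listMoment l₁ + l₁.length * l₂.count true + listMoment l₂ := by
  induction l₁ with
  | nil => simp [listMoment]
  | cons b l₁ ih =>
    simp only [List.cons_append, listMoment, ih, List.count_append, List.length_cons]; ring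

theorem List.count_true_cons (b : Bool) (l : List Bool) :
    (b :: l).count true = l.count true + b.toNat := by
  cases b <;> simp

theorem List.count_true_ofFn_s6 {n : ℕ} (x : Fin n → Bool) :
    (List.ofFn x).count true = ∑ i, if x i then 1 else 0 := by
  induction n with
  | zero => simp
  | succ n ih => rw [List.ofFn_succ, List.count_cons, ih, Fin.sum_univ_succ]; grind

theorem listMoment_ofFn {n : ℕ} (x : Fin n → Bool) : listMoment (List.ofFn x) = mom x := by
  induction n with
  | zero => simp [listMoment, mom]
  | succ n ih =>
    rw [List.ofFn_succ, listMoment, ih, List.count_true_ofFn_s6, mom, mom, Fin.sum_univ_succ]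
    simp only [Fin.val_succ, Fin.val_zero, add_mul, sum_add_distrib, one_mul, Bool.toNat,
      cond_eq_ite]
    ring

theorem List.exists_eq_append_cons_of_sublist_s6 {α : Type*} {w l : List α} (h : w.Sublist l)
    (hl : l.length = w.length + 1) : ∃ u v a, w = u ++ v ∧ l = u ++ a :: v := by
  induction h with
  | slnil => simp at hl
  | @cons w l a h _ => exact ⟨[], w, a, rfl, by rw [h.eq_of_length (by simpa using hl.symm)]; rfl⟩
  | @cons_cons w l a _ ih =>
    obtain ⟨u, v, b, rfl, rfl⟩ := ih (by simpa using hl)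
    exact ⟨a :: u, v, b, rfl, rfl⟩

theorem List.cons_append_eq_append_cons {α : Type*} {a : α} {s : List α} (v : List α)
    (hs : ∀ x ∈ s, x = a) : a :: (s ++ v) = s ++ a :: v := by
  induction s with
  | nil => rfl
  | cons x s ih =>
    simp only [List.mem_cons, forall_eq_or_imp] at hs
    simp only [hs.1, List.cons_append, ih hs.2]

/- The two moments differ by `(|u| + |s| + 1) b' - (|u| + 1) b - #₁s`, which is smaller in absolute
value than the modulus; so it vanishes, and that forces `b = b'` and `s` to be a run of `b`s. -/
theorem cons_append_eq_of_listMoment_modEq {u s v : List Bool} {b b' : Bool}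
    (h : listMoment (u ++ b :: (s ++ v)) ≡ listMoment (u ++ (s ++ b' :: v))
      [MOD u.length + s.length + v.length + 2]) :
    b :: (s ++ v) = s ++ b' :: v := by
  have hs := s.count_le_length (a := true)
  have key : (u.length + 1) * b.toNat + s.count true = (u.length + s.length + 1) * b'.toNat := by
    set R := listMoment u + u.length * (s.count true + v.count true) + v.count true +
      listMoment s + s.length * v.count true + listMoment v
    have h' : R + ((u.length + 1) * b.toNat + s.count true) ≡
        R + (u.length + s.length + 1) * b'.toNat [MOD u.length + s.length + v.length + 2] := by
      convert h using 1 <;>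
        simp only [R, listMoment_append, listMoment, List.count_true_cons, List.count_append] <;>
        ring
    refine (Nat.ModEq.add_left_cancel' R h').eq_of_lt_of_lt ?_ ?_ <;>
      cases b <;> cases b' <;> simp only [Bool.toNat_false, Bool.toNat_true, mul_zero, mul_one] <;>
      omega
  cases b <;> cases b' <;>
    simp only [Bool.toNat_false, Bool.toNat_true, mul_zero, mul_one, zero_add] at key
  · have : true ∉ s := List.count_eq_zero.mp key
    exact List.cons_append_eq_append_cons v fun x hx => Bool.eq_false_iff.mpr fun h => this (h ▸ hx)
  · omega
  · omega
  · exact List.cons_append_eq_append_cons v fun x hx =>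
      (List.count_eq_length.mp (by omega) x hx).symm

theorem eq_of_listMoment_modEq_of_sublist {w l₁ l₂ : List Bool} (h₁ : w.Sublist l₁)
    (h₂ : w.Sublist l₂) (hl₁ : l₁.length = w.length + 1) (hl₂ : l₂.length = w.length + 1)
    (h : listMoment l₁ ≡ listMoment l₂ [MOD w.length + 2]) : l₁ = l₂ := by
  obtain ⟨u₁, v₁, b₁, hw₁, rfl⟩ := List.exists_eq_append_cons_of_sublist_s6 h₁ hl₁
  obtain ⟨u₂, v₂, b₂, hw₂, rfl⟩ := List.exists_eq_append_cons_of_sublist_s6 h₂ hl₂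
  rcases List.append_eq_append_iff.mp (hw₁.symm.trans hw₂) with ⟨s, rfl, rfl⟩ | ⟨s, rfl, rfl⟩
  · rw [List.append_assoc, cons_append_eq_of_listMoment_modEq
      (by simpa [hw₁, ← add_assoc, List.append_assoc] using h)]
  · rw [List.append_assoc, cons_append_eq_of_listMoment_modEq
      (by simpa [hw₂, ← add_assoc, List.append_assoc] using h.symm)]

theorem eq_of_mom_modEq_of_sublist {n : ℕ} {x y : Fin n → Bool} (h : mom x ≡ mom y [MOD n + 1])
    {w : List Bool} (hw : w.length = n - 1) (hx : w.Sublist (List.ofFn x))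
    (hy : w.Sublist (List.ofFn y)) : x = y := by
  rcases Nat.eq_zero_or_pos n with rfl | hn
  · exact Subsingleton.elim x y
  apply List.ofFn_injective
  refine eq_of_listMoment_modEq_of_sublist hx hy (by simp only [List.length_ofFn]; omega)
    (by simp only [List.length_ofFn]; omega) ?_
  rwa [listMoment_ofFn, listMoment_ofFn, hw, show n - 1 + 2 = n + 1 by omega]

theorem Rat.ceil_natCast_div_two (n : ℕ) : ⌈(n : ℚ) / 2⌉ = ((n + 1) / 2 : ℕ) := by
  have := Rat.ceil_natCast_div_natCast n 2
  push_cast at this ⊢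
  omega

/-- One-flip moment balancing. From a code `C` of length `n`, size `M` and
minimum Hamming distance `d_min ≥ 3` one obtains a residue `a` mod `n+1` and a code `C'`
such that: (i) every `x ∈ C'` has `σ(x) ≡ a (mod n+1)`; (ii) every `x ∈ C'` is within
Hamming distance 1 of a codeword of `C` and no two distinct words of `C'` are within
distance 1 of the same codeword; (iii) `|C'| ≥ ⌈M(⌈n/2⌉+1)/(n+1)⌉ ≥ ⌈M/2⌉`;
(iv) `C'` has minimum Hamming distance at least `d_min − 2`; moreover distinct words of
`C'` have no common subsequence of length `n − 1` (single deletion correction). -/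
theorem stmt6 {n M dmin : ℕ} (C : Finset (Fin n → Bool)) (hM : C.card = M)
    (hdmin : 3 ≤ dmin)
    (hC : ∀ c ∈ C, ∀ c' ∈ C, c ≠ c' → dmin ≤ hammingDist c c') :
    ∃ (a : ℕ) (C' : Finset (Fin n → Bool)),
      (∀ x ∈ C', mom x % (n + 1) = a) ∧
      (∀ x ∈ C', ∃ c ∈ C, hammingDist c x ≤ 1) ∧
      (∀ x ∈ C', ∀ y ∈ C', x ≠ y →
        ∀ c ∈ C, ¬ (hammingDist c x ≤ 1 ∧ hammingDist c y ≤ 1)) ∧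
      (⌈(M : ℚ) * ((⌈(n : ℚ) / 2⌉ : ℚ) + 1) / ((n : ℚ) + 1)⌉ ≤ (C'.card : ℤ)) ∧
      (⌈(M : ℚ) / 2⌉ ≤ (C'.card : ℤ)) ∧
      (∀ x ∈ C', ∀ y ∈ C', x ≠ y → dmin - 2 ≤ hammingDist x y) ∧
      (∀ x ∈ C', ∀ y ∈ C', x ≠ y →
        ¬ ∃ w : List Bool, w.length = n - 1 ∧
          w.Sublist (List.ofFn x) ∧ w.Sublist (List.ofFn y)) := by
  obtain ⟨a, C', hmom, hnear, hsep, hcard⟩ :=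
    exists_moment_balanced_code C fun c hc c' hc' h => hdmin.trans (hC c hc c' hc' h)
  have hres : ∀ x ∈ C', mom x % (n + 1) = a.val := fun x hx => by
    rw [← ZMod.val_natCast, hmom x hx]
  have hceil : ⌈(M : ℚ) * ((⌈(n : ℚ) / 2⌉ : ℚ) + 1) / ((n : ℚ) + 1)⌉ ≤ (C'.card : ℤ) := by
    rw [Int.ceil_le, Rat.ceil_natCast_div_two, div_le_iff₀ (by positivity), ← hM]
    exact_mod_cast (mul_comm (n + 1) _) ▸ hcard
  have hhalf : (M : ℚ) / 2 ≤ M * ((⌈(n : ℚ) / 2⌉ : ℚ) + 1) / ((n : ℚ) + 1) := by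
    rw [div_le_div_iff₀ (by norm_num) (by positivity)]
    nlinarith [Int.le_ceil ((n : ℚ) / 2), (M.cast_nonneg : (0 : ℚ) ≤ M)]
  refine ⟨a.val, C', hres, hnear,
    fun x hx y hy hxy c hc ⟨h₁, h₂⟩ => hxy (hsep x hx y hy c hc h₁ h₂),
    hceil, (Int.ceil_mono hhalf).trans hceil, ?_, ?_⟩
  · intro x hx y hy hxy
    obtain ⟨c, hc, hcx⟩ := hnear x hx
    obtain ⟨c', hc', hcy⟩ := hnear y hy
    have hcc' : c ≠ c' := by
      rintro rfl
      exact hxy (hsep x hx y hy c hc hcx hcy)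
    have := hC c hc c' hc' hcc'
    have := hammingDist_le_hammingDist_add_two hcx hcy
    omega
  · rintro x hx y hy hxy ⟨w, hw, hwx, hwy⟩
    exact hxy (eq_of_mom_modEq_of_sublist ((hres x hx).trans (hres y hy).symm) hw hwx hwy)
end

section
/- Let C be a binary code of length n ≥ 1 with minimum Hamming distance d_min, let m be an integer with n < m ≤ 2^{⌊log₂ n⌋+1}, let a be a residue modulo m, and let F = {2^0, 2^1, …, 2^{⌊log₂ n⌋}} be the set of positions that are powers of two. Then: (i) for every c ∈ C there exists a binary word x_c of length n that agrees with c at every position outside F and satisfies σ(x_c) ≡ a (mod m); and (ii) for any such choice of words x_c and any two distinct codewords c, c' ∈ C, the number of positions outside F at which x_c and x_{c'} differ is at least d_min − (⌊log₂ n⌋ + 1). In particular, if d_min > ⌊log₂ n⌋ + 1 the map c ↦ x_c is injective. -/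
private lemma bits_sum (N : ℕ) : ∀ t : ℕ, t < 2 ^ N →
    ∑ k ∈ Finset.range N, 2 ^ k * (if Nat.testBit t k then 1 else 0) = t := by
  induction N with
  | zero =>
      intro t ht
      have : t = 0 := by simpa using ht
      simp [this]
  | succ N ih =>
      intro t ht
      have h2 : t / 2 < 2 ^ N := by
        have : 2 ^ (N + 1) = 2 ^ N * 2 := by ring
        omega
      calc ∑ k ∈ Finset.range (N + 1), 2 ^ k * (if Nat.testBit t k then 1 else 0)
          = (∑ k ∈ Finset.range N, 2 ^ (k + 1) * (if Nat.testBit (t / 2) k then 1 else 0))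
              + 2 ^ 0 * (if Nat.testBit t 0 then 1 else 0) := by
            rw [Finset.sum_range_succ']
            congr 1
            refine Finset.sum_congr rfl fun k _ => ?_
            rw [Nat.testBit_add_one]
        _ = 2 * (∑ k ∈ Finset.range N, 2 ^ k * (if Nat.testBit (t / 2) k then 1 else 0))
              + t % 2 := by
            rw [Finset.mul_sum]
            congr 1
            · refine Finset.sum_congr rfl fun k _ => ?_
              ring
            · rcases Nat.mod_two_eq_zero_or_one t with h | h <;>
                simp [Nat.testBit_zero, h]
        _ = 2 * (t / 2) + t % 2 := by rw [ih _ h2]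
        _ = t := by omega

open scoped Classical in
private lemma sumF {n : ℕ} (hn : 1 ≤ n) (g : ℕ → ℕ) :
    ∑ i ∈ Finset.univ.filter (fun i : Fin n => ∃ k, (i : ℕ) + 1 = 2 ^ k), g ((i : ℕ) + 1)
      = ∑ k ∈ Finset.range (Nat.log 2 n + 1), g (2 ^ k) := by
  have hlt : n < 2 ^ (Nat.log 2 n + 1) := Nat.lt_pow_succ_log_self (by norm_num) n
  refine Finset.sum_bij' (fun i _ => Nat.log 2 ((i : ℕ) + 1))
    (fun k hk => (⟨2 ^ k - 1, ?_⟩ : Fin n)) ?_ ?_ ?_ ?_ ?_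
  · -- 2 ^ k - 1 < n
    have hk' : k ≤ Nat.log 2 n := by
      simpa [Nat.lt_succ_iff] using Finset.mem_range.mp hk
    have : 2 ^ k ≤ n := le_trans (Nat.pow_le_pow_right (by norm_num) hk')
      (Nat.pow_log_le_self 2 (by omega))
    omega
  · intro i hi
    obtain ⟨k, hk⟩ := (Finset.mem_filter.mp hi).2
    have hkL : k ≤ Nat.log 2 n := by
      by_contra h
      have h1 : 2 ^ (Nat.log 2 n + 1) ≤ 2 ^ k := Nat.pow_le_pow_right (by norm_num) (by omega)
      have h2 : (i : ℕ) < n := i.2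
      omega
    show Nat.log 2 ((i : ℕ) + 1) ∈ Finset.range (Nat.log 2 n + 1)
    rw [hk, Nat.log_pow (by norm_num)]
    exact Finset.mem_range.mpr (by omega)
  · intro k hk
    exact Finset.mem_filter.mpr ⟨Finset.mem_univ _, ⟨k, by
      have hk' : k ≤ Nat.log 2 n := by
        simpa [Nat.lt_succ_iff] using Finset.mem_range.mp hk
      have : 2 ^ k ≤ n := le_trans (Nat.pow_le_pow_right (by norm_num) hk')
        (Nat.pow_log_le_self 2 (by omega))
      have : 1 ≤ 2 ^ k := Nat.one_le_two_pow
      simp only []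
      omega⟩⟩
  · intro i hi
    obtain ⟨k, hk⟩ := (Finset.mem_filter.mp hi).2
    apply Fin.ext
    simp only []
    rw [hk, Nat.log_pow (by norm_num)]
    omega
  · intro k hk
    have hk' : k ≤ Nat.log 2 n := by
      simpa [Nat.lt_succ_iff] using Finset.mem_range.mp hk
    have hkn : 2 ^ k ≤ n := le_trans (Nat.pow_le_pow_right (by norm_num) hk')
      (Nat.pow_log_le_self 2 (by omega))
    have h1 : 1 ≤ 2 ^ k := Nat.one_le_two_pow
    simp only []
    rw [show 2 ^ k - 1 + 1 = 2 ^ k by omega, Nat.log_pow (by norm_num)]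
  · intro i hi
    obtain ⟨k, hk⟩ := (Finset.mem_filter.mp hi).2
    show g ((i : ℕ) + 1) = g (2 ^ Nat.log 2 ((i : ℕ) + 1))
    rw [hk, Nat.log_pow (by norm_num)]

open scoped Classical in
/-- Fixed index bit flipping scheme. With `F` the set of positions whose
(1-based) index is a power of two: (i) every codeword can be moment-balanced to residue
`a` mod `m` by changing it only inside `F`; (ii) for any such assignment `c ↦ x_c`,
distinct codewords give words differing in at least `d_min − (⌊log₂ n⌋ + 1)` positions
outside `F`; in particular, if `d_min > ⌊log₂ n⌋ + 1` the assignment is injective. -/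
theorem stmt8 {n : ℕ} (hn : 1 ≤ n) (C : Set (Fin n → Bool)) (dmin m a : ℕ)
    (hmin : ∀ c ∈ C, ∀ c' ∈ C, c ≠ c' → dmin ≤ hammingDist c c')
    (hm1 : n < m) (hm2 : m ≤ 2 ^ (Nat.log 2 n + 1)) :
    (∀ c ∈ C, ∃ x : Fin n → Bool,
        (∀ i : Fin n, (¬ ∃ k, (i : ℕ) + 1 = 2 ^ k) → x i = c i) ∧
        mom x ≡ a [MOD m]) ∧
    (∀ x : (Fin n → Bool) → (Fin n → Bool),
      (∀ c ∈ C, (∀ i : Fin n, (¬ ∃ k, (i : ℕ) + 1 = 2 ^ k) → x c i = c i) ∧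
        mom (x c) ≡ a [MOD m]) →
      (∀ c ∈ C, ∀ c' ∈ C, c ≠ c' →
        dmin - (Nat.log 2 n + 1) ≤
          (Finset.univ.filter
            (fun i : Fin n => (¬ ∃ k, (i : ℕ) + 1 = 2 ^ k) ∧ x c i ≠ x c' i)).card) ∧
      (Nat.log 2 n + 1 < dmin → Set.InjOn x C)) := by
  have hm0 : 0 < m := by omega
  set L := Nat.log 2 n with hLdef
  -- cardinality of the power-of-two positions
  have hFcard : (Finset.univ.filter (fun i : Fin n => ∃ k, (i : ℕ) + 1 = 2 ^ k)).card ≤ L + 1 := by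
    have h0 : ∑ i ∈ Finset.univ.filter (fun i : Fin n => ∃ k, (i : ℕ) + 1 = 2 ^ k), 1
        = ∑ _k ∈ Finset.range (L + 1), 1 := sumF (n := n) hn (fun _ => 1)
    have h1 : (Finset.univ.filter (fun i : Fin n => ∃ k, (i : ℕ) + 1 = 2 ^ k)).card
        = ∑ i ∈ Finset.univ.filter (fun i : Fin n => ∃ k, (i : ℕ) + 1 = 2 ^ k), 1 := by simp
    have h2 : ∑ _k ∈ Finset.range (L + 1), 1 = L + 1 := by simp
    omega
  constructor
  · -- part (i)
    intro c _
    set S := ∑ i ∈ Finset.univ.filter (fun i : Fin n => ¬ ∃ k, (i : ℕ) + 1 = 2 ^ k),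
        ((i : ℕ) + 1) * (if c i then 1 else 0) with hSdef
    set t := (a + (m - S % m)) % m with htdef
    have htm : t < m := Nat.mod_lt _ hm0
    have htpow : t < 2 ^ (L + 1) := lt_of_lt_of_le htm hm2
    refine ⟨fun i => if h : ∃ k, (i : ℕ) + 1 = 2 ^ k
        then Nat.testBit t (Nat.log 2 ((i : ℕ) + 1)) else c i, fun i hi => dif_neg hi, ?_⟩
    have hmom : mom (fun i : Fin n => if h : ∃ k, (i : ℕ) + 1 = 2 ^ k
        then Nat.testBit t (Nat.log 2 ((i : ℕ) + 1)) else c i) = t + S := by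
      unfold mom
      rw [← Finset.sum_filter_add_sum_filter_not Finset.univ
        (fun i : Fin n => ∃ k, (i : ℕ) + 1 = 2 ^ k)]
      have hA : ∑ i ∈ Finset.univ.filter (fun i : Fin n => ∃ k, (i : ℕ) + 1 = 2 ^ k),
          ((i : ℕ) + 1) * (if (if h : ∃ k, (i : ℕ) + 1 = 2 ^ k
            then Nat.testBit t (Nat.log 2 ((i : ℕ) + 1)) else c i) then 1 else 0) = t := by
        have step : ∀ i ∈ Finset.univ.filter (fun i : Fin n => ∃ k, (i : ℕ) + 1 = 2 ^ k),
            ((i : ℕ) + 1) * (if (if h : ∃ k, (i : ℕ) + 1 = 2 ^ k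
              then Nat.testBit t (Nat.log 2 ((i : ℕ) + 1)) else c i) then 1 else 0)
            = ((i : ℕ) + 1) * (if Nat.testBit t (Nat.log 2 ((i : ℕ) + 1)) then 1 else 0) := by
          intro i hi
          rw [dif_pos (Finset.mem_filter.mp hi).2]
        rw [Finset.sum_congr rfl step,
          sumF hn (fun v => v * (if Nat.testBit t (Nat.log 2 v) then 1 else 0))]
        have : ∀ k ∈ Finset.range (L + 1),
            2 ^ k * (if Nat.testBit t (Nat.log 2 (2 ^ k)) then 1 else 0)
              = 2 ^ k * (if Nat.testBit t k then 1 else 0) := by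
          intro k _
          rw [Nat.log_pow (by norm_num)]
        rw [Finset.sum_congr rfl this]
        exact bits_sum (L + 1) t htpow
      have hB : ∑ i ∈ Finset.univ.filter (fun i : Fin n => ¬ ∃ k, (i : ℕ) + 1 = 2 ^ k),
          ((i : ℕ) + 1) * (if (if h : ∃ k, (i : ℕ) + 1 = 2 ^ k
            then Nat.testBit t (Nat.log 2 ((i : ℕ) + 1)) else c i) then 1 else 0) = S := by
        refine Finset.sum_congr rfl fun i hi => ?_
        rw [dif_neg (Finset.mem_filter.mp hi).2]
      rw [hA, hB]
    rw [hmom]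
    have h1 : t ≡ a + (m - S % m) [MOD m] := Nat.mod_modEq _ m
    have h2 : S ≡ S % m [MOD m] := (Nat.mod_modEq S m).symm
    calc t + S ≡ (a + (m - S % m)) + S % m [MOD m] := h1.add h2
      _ = a + m := by have := Nat.mod_lt S hm0; omega
      _ ≡ a [MOD m] := by
          simp [Nat.ModEq, Nat.add_mod_right]
  · -- part (ii)
    intro x hx
    have hdiff : ∀ c ∈ C, ∀ c' ∈ C, c ≠ c' →
        dmin - (L + 1) ≤ (Finset.univ.filter
          (fun i : Fin n => (¬ ∃ k, (i : ℕ) + 1 = 2 ^ k) ∧ x c i ≠ x c' i)).card := by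
      intro c hc c' hc' hne
      have hd := hmin c hc c' hc' hne
      have heq : Finset.univ.filter
            (fun i : Fin n => (¬ ∃ k, (i : ℕ) + 1 = 2 ^ k) ∧ x c i ≠ x c' i)
          = Finset.univ.filter
            (fun i : Fin n => (¬ ∃ k, (i : ℕ) + 1 = 2 ^ k) ∧ c i ≠ c' i) := by
        refine Finset.filter_congr fun i _ => ?_
        constructor
        · rintro ⟨hP, hne'⟩
          exact ⟨hP, by rwa [(hx c hc).1 i hP, (hx c' hc').1 i hP] at hne'⟩
        · rintro ⟨hP, hne'⟩
          exact ⟨hP, by rw [(hx c hc).1 i hP, (hx c' hc').1 i hP]; exact hne'⟩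
      rw [heq]
      have hsub : (Finset.univ.filter (fun i : Fin n => c i ≠ c' i))
          ⊆ (Finset.univ.filter
              (fun i : Fin n => (¬ ∃ k, (i : ℕ) + 1 = 2 ^ k) ∧ c i ≠ c' i))
            ∪ (Finset.univ.filter (fun i : Fin n => ∃ k, (i : ℕ) + 1 = 2 ^ k)) := by
        intro i hi
        have hi' : c i ≠ c' i := (Finset.mem_filter.mp hi).2
        by_cases hP : ∃ k, (i : ℕ) + 1 = 2 ^ k
        · exact Finset.mem_union_right _ (Finset.mem_filter.mpr ⟨Finset.mem_univ _, hP⟩)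
        · exact Finset.mem_union_left _ (Finset.mem_filter.mpr ⟨Finset.mem_univ _, hP, hi'⟩)
      have hdc : hammingDist c c' = (Finset.univ.filter (fun i : Fin n => c i ≠ c' i)).card := by
        unfold hammingDist
        congr 1
      have hcard := (Finset.card_le_card hsub).trans (Finset.card_union_le _ _)
      omega
    refine ⟨hdiff, ?_⟩
    intro hgt c hc c' hc' hxeq
    by_contra hne
    have h := hdiff c hc c' hc' hne
    have hzero : (Finset.univ.filter
        (fun i : Fin n => (¬ ∃ k, (i : ℕ) + 1 = 2 ^ k) ∧ x c i ≠ x c' i)).card = 0 := by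
      rw [Finset.card_eq_zero, Finset.filter_eq_empty_iff]
      intro i _
      rw [hxeq]
      simp
    omega
end

section
/- Let n ≥ 1, let m be an integer with m ≥ 2n, and let a be a residue modulo m. If x and y are distinct binary words of length n with σ(x) ≡ a (mod m) and σ(y) ≡ a (mod m), then the Hamming distance between x and y is at least 3; that is, the Varshamov–Tenengolts code {x ∈ {0,1}^n : σ(x) ≡ a (mod m)} with modulus m ≥ 2n corrects a single substitution error. -/
/-- Levenshtein: for `m ≥ 2n`, two distinct words of length `n` with the
same moment residue `a` mod `m` are at Hamming distance at least 3; the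
Varshamov–Tenengolts code with modulus `m ≥ 2n` corrects a single substitution error. -/
theorem stmt14 {n : ℕ} (hn : 1 ≤ n) (m a : ℕ) (hm : 2 * n ≤ m)
    (x y : Fin n → Bool) (hxy : x ≠ y)
    (hx : mom x ≡ a [MOD m]) (hy : mom y ≡ a [MOD m]) :
    3 ≤ hammingDist x y := by
  by_contra hcon
  push_neg at hcon
  have hpos : 0 < hammingDist x y := hammingDist_pos.mpr hxy
  set S : Finset (Fin n) := Finset.univ.filter fun i => x i ≠ y i with hSdef
  have hcard : hammingDist x y = S.card := rfl
  set e : Fin n → ℤ := fun i => (if y i then (1:ℤ) else 0) - (if x i then 1 else 0) with he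
  have hd : (mom y : ℤ) - (mom x : ℤ) = ∑ i ∈ S, ((i:ℤ) + 1) * e i := by
    rw [hSdef, Finset.sum_filter]
    simp only [mom, Nat.cast_sum, ← Finset.sum_sub_distrib]
    refine Finset.sum_congr rfl fun i _ => ?_
    by_cases hxi : x i <;> by_cases hyi : y i <;> simp [he, hxi, hyi]
  have hdvd : (m : ℤ) ∣ (mom y : ℤ) - (mom x : ℤ) := (hx.trans hy.symm).dvd
  rw [hd] at hdvd
  have hei : ∀ i ∈ S, e i = 1 ∨ e i = -1 := by
    intro i hi
    rw [hSdef, Finset.mem_filter] at hi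
    by_cases hxi : x i <;> by_cases hyi : y i <;> simp [he, hxi, hyi] <;> simp_all
  have hmZ : (2:ℤ) * n ≤ m := by exact_mod_cast hm
  have h12 : S.card = 1 ∨ S.card = 2 := by omega
  rcases h12 with h1 | h2
  · obtain ⟨i, hi⟩ := Finset.card_eq_one.mp h1
    rw [hi, Finset.sum_singleton] at hdvd
    have hiS : i ∈ S := hi ▸ Finset.mem_singleton_self i
    have hi2 : (i : ℕ) < n := i.2
    have hzero : ((i:ℤ) + 1) * e i = 0 := by
      apply Int.eq_zero_of_abs_lt_dvd hdvd
      rcases hei i hiS with h | h <;> rw [abs_mul, h] <;>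
        simp [abs_of_nonneg (by positivity : (0:ℤ) ≤ ((i:ℕ):ℤ) + 1)] <;> omega
    rcases hei i hiS with h | h <;> rw [h] at hzero <;> omega
  · obtain ⟨i, j, hij, hS2⟩ := Finset.card_eq_two.mp h2
    rw [hS2, Finset.sum_pair hij] at hdvd
    have hiS : i ∈ S := hS2 ▸ by simp
    have hjS : j ∈ S := hS2 ▸ by simp
    have hi2 : (i : ℕ) < n := i.2
    have hj2 : (j : ℕ) < n := j.2
    have hijv : (i : ℕ) ≠ (j : ℕ) := fun h => hij (Fin.ext h)
    have hzero : ((i:ℤ) + 1) * e i + ((j:ℤ) + 1) * e j = 0 := by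
      apply Int.eq_zero_of_abs_lt_dvd hdvd
      have : |((i:ℤ) + 1) * e i + ((j:ℤ) + 1) * e j| ≤
          |((i:ℤ) + 1) * e i| + |((j:ℤ) + 1) * e j| := abs_add_le _ _
      have hia : |((i:ℤ) + 1) * e i| = (i:ℤ) + 1 := by
        rcases hei i hiS with h | h <;> rw [abs_mul, h] <;>
          simp [abs_of_nonneg (by positivity : (0:ℤ) ≤ ((i:ℕ):ℤ) + 1)]
      have hja : |((j:ℤ) + 1) * e j| = (j:ℤ) + 1 := by
        rcases hei j hjS with h | h <;> rw [abs_mul, h] <;>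
          simp [abs_of_nonneg (by positivity : (0:ℤ) ≤ ((j:ℕ):ℤ) + 1)]
      omega
    rcases hei i hiS with h | h <;> rcases hei j hjS with h' | h' <;>
      rw [h, h'] at hzero <;> omega
end
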